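/- Let G be a finite simple graph on n vertices, let m be the number of distinct vertex degrees of G (the number of i ∈ {1,…,n−1} with n_i > 0, where n_i is the number of vertices of degree i; G has no isolated vertices), and for 1 ≤ i ≤ n−1 let D_i = ∑_{k=1}^{i} χ_{ki} + ∑_{k=i+1}^{n−1} χ_{ik}, where χ_{ik} = 1 if j_{ik}(G) > 0 and χ_{ik} = 0 otherwise. Call a degree i single if n_i = 1 and multiple if n_i ≥ 2. Then ∑_{i=1}^{n−1} D_i ≤ ∑_{i single} min(m, i) + √m · √(∑_{i multiple} min(m,i)) · √(∑_{i multiple} n_i). -/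

import Mathlib

noncomputable def gdeg {n : ℕ} (G : SimpleGraph (Fin n)) (v : Fin n) : ℕ :=
  letI := Classical.decRel G.Adj
  G.degree v

noncomputable def jdv {n : ℕ} (G : SimpleGraph (Fin n)) (i k : ℕ) : ℕ :=
  Set.ncard {e ∈ G.edgeSet | Sym2.map (gdeg G) e = s(i, k)}

noncomputable def jdvSupport {n : ℕ} (G : SimpleGraph (Fin n)) : Finset (ℕ × ℕ) :=
  (Finset.Icc 1 (n - 1) ×ˢ Finset.Icc 1 (n - 1)).filter
    (fun p => p.1 ≤ p.2 ∧ 0 < jdv G p.1 p.2)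

noncomputable def degCount {n : ℕ} (G : SimpleGraph (Fin n)) (i : ℕ) : ℕ :=
  Set.ncard {v : Fin n | gdeg G v = i}

/-- The number of distinct vertex degrees of `G` (among `1, …, n-1`). -/
noncomputable def numDeg {n : ℕ} (G : SimpleGraph (Fin n)) : ℕ :=
  ((Finset.Icc 1 (n - 1)).filter (fun i => 0 < degCount G i)).card

/-- `Dvec G i = ∑_{k=1}^{i} χ_{ki} + ∑_{k=i+1}^{n-1} χ_{ik}`, where `χ_{ik} = 1` iff
`j_{ik}(G) > 0`. -/
noncomputable def Dvec {n : ℕ} (G : SimpleGraph (Fin n)) (i : ℕ) : ℕ :=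
  ((Finset.Icc 1 i).filter (fun k => 0 < jdv G k i)).card +
    ((Finset.Icc (i + 1) (n - 1)).filter (fun k => 0 < jdv G i k)).card

open Finset

/-!
Every degree `k` counted in `D_i` is the degree of a neighbour of a vertex of degree `i`, so
`D_i` is at most the number `m` of distinct degrees and at most the number `n_i * i` of such
neighbours (with multiplicity). For a single degree this gives `D_i ≤ min(m, i)`; for a multiple
one `D_i² ≤ m * min(m, i) * n_i`, and Cauchy–Schwarz over the multiple degrees finishes.
-/

theorem Real.sum_le_sqrt_mul_sqrt_mul_sqrt {ι : Type*} (s : Finset ι) {d a b : ι → ℝ} {M : ℝ}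
    (hM : 0 ≤ M) (ha : ∀ i, 0 ≤ a i) (hb : ∀ i, 0 ≤ b i)
    (h : ∀ i ∈ s, d i ^ 2 ≤ M * (a i * b i)) :
    ∑ i ∈ s, d i ≤ √M * √(∑ i ∈ s, a i) * √(∑ i ∈ s, b i) :=
  calc ∑ i ∈ s, d i ≤ ∑ i ∈ s, √M * (√(a i) * √(b i)) := sum_le_sum fun i hi => by
        rw [← Real.sqrt_mul (ha i), ← Real.sqrt_mul hM]
        exact Real.le_sqrt_of_sq_le (h i hi)
    _ = √M * ∑ i ∈ s, √(a i) * √(b i) := (mul_sum _ _ _).symm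
    _ ≤ √M * (√(∑ i ∈ s, a i) * √(∑ i ∈ s, b i)) := by
        gcongr; exact Real.sum_sqrt_mul_sqrt_le s ha hb
    _ = _ := (mul_assoc _ _ _).symm

theorem Nat.sq_le_mul_min_mul {d m c i : ℕ} (hc : 1 ≤ c) (hdm : d ≤ m) (hdc : d ≤ c * i) :
    d ^ 2 ≤ m * (min m i * c) := by
  have hd : d ≤ min m i * c := by
    rcases le_total m i with h | h
    · rw [min_eq_left h]; nlinarith
    · rw [min_eq_right h, mul_comm]; exact hdc
  rw [sq]
  exact Nat.mul_le_mul hdm hd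

section

variable {n : ℕ} (G : SimpleGraph (Fin n))

theorem gdeg_eq_degree [DecidableRel G.Adj] (v : Fin n) : gdeg G v = G.degree v := by
  unfold gdeg
  congr!

theorem gdeg_pos_of_adj {v w : Fin n} (h : G.Adj v w) : 0 < gdeg G v := by
  classical
  rw [gdeg_eq_degree]
  exact G.degree_pos_iff_exists_adj v |>.2 ⟨w, h⟩

theorem gdeg_lt (v : Fin n) : gdeg G v < n := by
  classical
  simpa [gdeg_eq_degree] using G.degree_lt_card_verts (v := v)

theorem degCount_eq_card (i : ℕ) : degCount G i = #{v | gdeg G v = i} := by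
  simp [degCount, ← Set.ncard_coe_finset]

theorem degCount_pos_of_gdeg_eq {v : Fin n} {i : ℕ} (h : gdeg G v = i) : 0 < degCount G i := by
  rw [degCount_eq_card]
  exact card_pos.2 ⟨v, by simp [h]⟩

theorem exists_adj_of_jdv_pos {a b : ℕ} (h : 0 < jdv G a b) :
    ∃ v w, G.Adj v w ∧ gdeg G v = a ∧ gdeg G w = b := by
  obtain ⟨e, he, hmap⟩ := Set.nonempty_of_ncard_ne_zero h.ne'
  induction e using Sym2.ind with
  | _ v w =>
    rw [Sym2.map_mk, Sym2.eq_iff] at hmap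
    rcases hmap with ⟨hv, hw⟩ | ⟨hw, hv⟩
    · exact ⟨v, w, he, hv, hw⟩
    · exact ⟨w, v, he.symm, hv, hw⟩

theorem Dvec_le_card {i : ℕ} {T : Finset ℕ}
    (hT : ∀ v w, G.Adj v w → gdeg G v = i → gdeg G w ∈ T) : Dvec G i ≤ #T := by
  have hdisj : Disjoint (Icc 1 i) (Icc (i + 1) (n - 1)) :=
    disjoint_left.2 fun k h₁ h₂ => by simp only [mem_Icc] at h₁ h₂; omega
  rw [Dvec, ← card_union_of_disjoint (disjoint_filter_filter hdisj)]
  refine card_le_card fun k hk => ?_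
  simp only [mem_union, mem_filter] at hk
  rcases hk with ⟨-, hk⟩ | ⟨-, hk⟩
  · obtain ⟨w, v, hwv, rfl, hv⟩ := exists_adj_of_jdv_pos G hk
    exact hT v w (hwv.symm) hv
  · obtain ⟨v, w, hvw, hv, rfl⟩ := exists_adj_of_jdv_pos G hk
    exact hT v w hvw hv

theorem Dvec_le_numDeg (i : ℕ) : Dvec G i ≤ numDeg G :=
  Dvec_le_card G fun v w hvw _ => by
    have := gdeg_lt G w
    simp only [mem_filter, mem_Icc]
    exact ⟨⟨gdeg_pos_of_adj G (hvw.symm), by omega⟩, degCount_pos_of_gdeg_eq G rfl⟩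

theorem Dvec_le_degCount_mul (i : ℕ) : Dvec G i ≤ degCount G i * i := by
  classical
  let nbrs := ({v | gdeg G v = i} : Finset (Fin n)).biUnion (G.neighborFinset ·)
  calc Dvec G i ≤ #(nbrs.image (gdeg G)) :=
        Dvec_le_card G fun v w hvw hv =>
          mem_image_of_mem _ (mem_biUnion.2 ⟨v, by simp [hv], by simpa using hvw⟩)
    _ ≤ #nbrs := card_image_le
    _ ≤ ∑ v ∈ {v | gdeg G v = i}, #(G.neighborFinset v) := card_biUnion_le
    _ = degCount G i * i := by
        rw [degCount_eq_card, sum_const_nat]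
        intro v hv
        rw [G.card_neighborFinset_eq_degree, ← gdeg_eq_degree, (mem_filter.1 hv).2]

theorem sum_Dvec_eq_add (s : Finset ℕ) :
    ∑ i ∈ s, Dvec G i =
      ∑ i ∈ s with degCount G i = 1, Dvec G i + ∑ i ∈ s with 2 ≤ degCount G i, Dvec G i := by
  rw [sum_filter, sum_filter, ← sum_add_distrib]
  refine sum_congr rfl fun i _ => ?_
  obtain h | h | h : degCount G i = 0 ∨ degCount G i = 1 ∨ 2 ≤ degCount G i := by omega
  · have := Dvec_le_degCount_mul G i
    simp_all
  · simp [h]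
  · simp [h, show degCount G i ≠ 1 by omega]

end

theorem stmt16_general (n : ℕ) (G : SimpleGraph (Fin n)) :
    (∑ i ∈ Finset.Icc 1 (n - 1), (Dvec G i : ℝ)) ≤
      (∑ i ∈ (Finset.Icc 1 (n - 1)).filter (fun i => degCount G i = 1),
          ((min (numDeg G) i : ℕ) : ℝ)) +
      Real.sqrt (numDeg G) *
        Real.sqrt (∑ i ∈ (Finset.Icc 1 (n - 1)).filter (fun i => 2 ≤ degCount G i),
          ((min (numDeg G) i : ℕ) : ℝ)) *
        Real.sqrt (∑ i ∈ (Finset.Icc 1 (n - 1)).filter (fun i => 2 ≤ degCount G i),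
          (degCount G i : ℝ)) := by
  rw [← Nat.cast_sum, sum_Dvec_eq_add, Nat.cast_add, Nat.cast_sum, Nat.cast_sum]
  refine add_le_add (sum_le_sum fun i hi => ?_) ?_
  · have hi := (mem_filter.1 hi).2
    have := Dvec_le_degCount_mul G i
    rw [hi, one_mul] at this
    exact_mod_cast le_min (Dvec_le_numDeg G i) this
  · refine Real.sum_le_sqrt_mul_sqrt_mul_sqrt _ (Nat.cast_nonneg _) (fun _ => Nat.cast_nonneg _)
      (fun _ => Nat.cast_nonneg _) fun i hi => ?_
    have hi := (mem_filter.1 hi).2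
    exact_mod_cast Nat.sq_le_mul_min_mul (by omega) (Dvec_le_numDeg G i) (Dvec_le_degCount_mul G i)

theorem stmt16 (n : ℕ) (G : SimpleGraph (Fin n)) (hG : ∀ v, gdeg G v ≠ 0) :
    (∑ i ∈ Finset.Icc 1 (n - 1), (Dvec G i : ℝ)) ≤
      (∑ i ∈ (Finset.Icc 1 (n - 1)).filter (fun i => degCount G i = 1),
          ((min (numDeg G) i : ℕ) : ℝ)) +
      Real.sqrt (numDeg G) *
        Real.sqrt (∑ i ∈ (Finset.Icc 1 (n - 1)).filter (fun i => 2 ≤ degCount G i),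
          ((min (numDeg G) i : ℕ) : ℝ)) *
        Real.sqrt (∑ i ∈ (Finset.Icc 1 (n - 1)).filter (fun i => 2 ≤ degCount G i),
          (degCount G i : ℝ)) :=
  stmt16_general n G
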